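/- arXiv:1911.00068 — 2 statements merged into one kernel-verified Lean document; each statement's English description precedes it below -/
import Mathlib

section
/- If for every example x with true label y* = j the predicted probability satisfies p̂(ỹ = i ; x) = p(ỹ = i | y* = j) (the ideal condition), then the per-class threshold t_i, defined as the average of p̂(ỹ = i ; x) over all examples x with noisy label ỹ = i, equals ∑_{j=1}^{m} p(ỹ = i | y* = j) · p(y* = j | ỹ = i). -/
open Finset

theorem Finset.sum_comp_eq_sum_mul_card_filter {ι κ R : Type*} [Fintype κ] [DecidableEq κ]
    [NonAssocSemiring R] (s : Finset ι) (g : ι → κ) (f : κ → R) :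
    ∑ x ∈ s, f (g x) = ∑ j, f j * #{x ∈ s | g x = j} := by
  rw [← sum_fiberwise s g]
  refine sum_congr rfl fun j _ => ?_
  rw [sum_congr rfl fun x hx => congrArg f (mem_filter.mp hx).2, sum_const, nsmul_eq_mul,
    Nat.cast_comm]

/-- Law of total expectation for the uniform distribution on `s`, conditioning on `g`. -/
theorem Finset.sum_comp_div_card_eq_sum_mul_div_card {ι κ 𝕜 : Type*} [Fintype κ] [DecidableEq κ]
    [DivisionRing 𝕜] (s : Finset ι) (g : ι → κ) (f : κ → 𝕜) :
    (∑ x ∈ s, f (g x)) / #s = ∑ j, f j * (#{x ∈ s | g x = j} / #s) := by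
  simp only [sum_comp_eq_sum_mul_card_filter, sum_div, mul_div_assoc]

/-- `p(y* = j | ỹ = i)` is modelled as the empirical fraction of the examples with noisy
label `i` whose true label is `j`. -/
theorem ideal_thresholds_general {m : ℕ} {X : Type} [Fintype X]
    (noisy ystar : X → Fin m) (phat : X → Fin m → ℝ)
    (Q : Fin m → Fin m → ℝ)
    (hideal : ∀ x i, phat x i = Q i (ystar x)) :
    ∀ i : Fin m,
      (∑ x ∈ Finset.univ.filter (fun x => noisy x = i), phat x i) /
          ((Finset.univ.filter (fun x => noisy x = i)).card : ℝ)
        = ∑ j : Fin m, Q i j *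
            (((Finset.univ.filter (fun x => noisy x = i ∧ ystar x = j)).card : ℝ) /
              ((Finset.univ.filter (fun x => noisy x = i)).card : ℝ)) := by
  intro i
  simp only [hideal, sum_comp_div_card_eq_sum_mul_div_card, filter_filter]

/-- Ideal Thresholds: under the ideal condition, the per-class threshold
(average self-confidence over examples with noisy label `i`) equals
`∑ j, p(ỹ=i | y*=j) · p(y*=j | ỹ=i)`, where the latter conditional is the
empirical fraction of examples with noisy label `i` whose true label is `j`. -/
theorem ideal_thresholds {m : ℕ} {X : Type} [Fintype X]
    (noisy ystar : X → Fin m) (phat : X → Fin m → ℝ)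
    (Q : Fin m → Fin m → ℝ)
    (hideal : ∀ x i, phat x i = Q i (ystar x))
    (hne : ∀ i : Fin m, (Finset.univ.filter (fun x => noisy x = i)).Nonempty) :
    ∀ i : Fin m,
      (∑ x ∈ Finset.univ.filter (fun x => noisy x = i), phat x i) /
          ((Finset.univ.filter (fun x => noisy x = i)).card : ℝ)
        = ∑ j : Fin m, Q i j *
            (((Finset.univ.filter (fun x => noisy x = i ∧ ystar x = j)).card : ℝ) /
              ((Finset.univ.filter (fun x => noisy x = i)).card : ℝ)) :=
  ideal_thresholds_general noisy ystar phat Q hideal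
end

section
/- (Per-Class Robustness) Let predicted probabilities be per-class diffracted: p̂(ỹ = j ; x) = ε_j^{(1)} · (p*(ỹ = j | y* = y*(x)) + ε_j^{(2)}) for real constants ε_j^{(1)} > 0 and ε_j^{(2)} depending only on class j. If there are no label collisions and each diagonal entry of Q_{ỹ|y*} maximizes its row, then the confident-joint bins computed from the diffracted probabilities equal the bins computed from the ideal probabilities, and both equal X_{ỹ=i, y*=j} for all i, j. -/
open Finset
open scoped BigOperators

/-!
Averaging commutes with the affine map `q ↦ ε₁ (q + ε₂)`, so the diffracted threshold of
class `j` is the image of the ideal one, and since `ε₁ > 0` the two confidence tests agree.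
The ideal threshold is an average of row `j` of `Q`, hence at most `Q j j`: every example is
confident in its true class, and without collisions in no other.
-/

lemma mul_add_le_mul_add_iff {K : Type*} [Field K] [LinearOrder K] [IsStrictOrderedRing K]
    {a b s t : K} (ha : 0 < a) : a * (s + b) ≤ a * (t + b) ↔ s ≤ t := by
  rw [mul_le_mul_iff_right₀ ha, add_le_add_iff_right]

lemma Finset.expect_mul_add {ι K : Type*} [Field K] [CharZero K] {s : Finset ι}
    (hs : s.Nonempty) (f : ι → K) (a b : K) :
    𝔼 i ∈ s, a * (f i + b) = a * (𝔼 i ∈ s, f i + b) := by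
  rw [← mul_expect, expect_add_distrib, expect_const hs]

theorem per_class_robustness_general {m : ℕ} {X : Type} [Fintype X]
    (noisy ystar : X → Fin m) (phat : X → Fin m → ℝ)
    (Q : Fin m → Fin m → ℝ) (e1 e2 : Fin m → ℝ)
    (hne : ∀ j : Fin m, (Finset.univ.filter (fun x => noisy x = j)).Nonempty)
    (he1 : ∀ j, 0 < e1 j)
    (hdiff : ∀ x j, phat x j = e1 j * (Q j (ystar x) + e2 j))
    (hrow : ∀ j i, Q j i ≤ Q j j)
    (tD tI : Fin m → ℝ)
    (htD : ∀ j, tD j = (∑ x ∈ Finset.univ.filter (fun x => noisy x = j), phat x j) /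
        ((Finset.univ.filter (fun x => noisy x = j)).card : ℝ))
    (htI : ∀ j, tI j = (∑ x ∈ Finset.univ.filter (fun x => noisy x = j), Q j (ystar x)) /
        ((Finset.univ.filter (fun x => noisy x = j)).card : ℝ))
    (hnocollision : ∀ x : X, ∀ j k : Fin m,
        phat x j ≥ tD j → phat x k ≥ tD k → j = k) :
    ∀ i j : Fin m,
      ({x : X | noisy x = i ∧ phat x j ≥ tD j}
          = {x : X | noisy x = i ∧ Q j (ystar x) ≥ tI j}) ∧
      ({x : X | noisy x = i ∧ Q j (ystar x) ≥ tI j}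
          = {x : X | noisy x = i ∧ ystar x = j}) := by
  have htD_eq : ∀ j, tD j = e1 j * (tI j + e2 j) := fun j => by
    rw [htD, htI, ← expect_eq_sum_div_card, ← expect_eq_sum_div_card,
      ← expect_mul_add (hne j)]
    simp only [hdiff]
  have hconfident : ∀ x j, phat x j ≥ tD j ↔ Q j (ystar x) ≥ tI j := fun x j => by
    rw [hdiff, htD_eq, ge_iff_le, ge_iff_le, mul_add_le_mul_add_iff (he1 j)]
  have htI_le : ∀ j, tI j ≤ Q j j := fun j => by
    rw [htI, ← expect_eq_sum_div_card]
    exact expect_le (hne j) fun x _ => hrow j (ystar x)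
  have hbin : ∀ x j, Q j (ystar x) ≥ tI j ↔ ystar x = j := fun x j =>
    ⟨fun h => hnocollision x _ _ ((hconfident x _).2 (htI_le _)) ((hconfident x j).2 h),
      by rintro rfl; exact htI_le _⟩
  intro i j
  constructor <;> ext x <;> simp only [Set.mem_ofPred_eq, hconfident, hbin]

/-- (Per-Class Robustness) If predicted probabilities are per-class diffracted,
`p̂(ỹ=j; x) = ε₁ j * (p*(ỹ=j | y*=y*(x)) + ε₂ j)` with `ε₁ j > 0`, there are
no label collisions, and each diagonal entry of `Q` maximizes its row, then
the confident-joint bins computed from the diffracted probabilities equal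
those computed from the ideal probabilities, and both equal the true
partition `{x : ỹ(x) = i ∧ y*(x) = j}`. -/
theorem per_class_robustness {m : ℕ} {X : Type} [Fintype X]
    (noisy ystar : X → Fin m) (phat : X → Fin m → ℝ)
    (Q : Fin m → Fin m → ℝ) (e1 e2 : Fin m → ℝ)
    (hQnonneg : ∀ i j, 0 ≤ Q i j)
    (hQstoch : ∀ j, ∑ i : Fin m, Q i j = 1)
    (hne : ∀ j : Fin m, (Finset.univ.filter (fun x => noisy x = j)).Nonempty)
    (he1 : ∀ j, 0 < e1 j)
    (hdiff : ∀ x j, phat x j = e1 j * (Q j (ystar x) + e2 j))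
    (hrow : ∀ j i, Q j i ≤ Q j j)
    (tD tI : Fin m → ℝ)
    (htD : ∀ j, tD j = (∑ x ∈ Finset.univ.filter (fun x => noisy x = j), phat x j) /
        ((Finset.univ.filter (fun x => noisy x = j)).card : ℝ))
    (htI : ∀ j, tI j = (∑ x ∈ Finset.univ.filter (fun x => noisy x = j), Q j (ystar x)) /
        ((Finset.univ.filter (fun x => noisy x = j)).card : ℝ))
    (hnocollision : ∀ x : X, ∀ j k : Fin m,
        phat x j ≥ tD j → phat x k ≥ tD k → j = k) :
    ∀ i j : Fin m,
      ({x : X | noisy x = i ∧ phat x j ≥ tD j}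
          = {x : X | noisy x = i ∧ Q j (ystar x) ≥ tI j}) ∧
      ({x : X | noisy x = i ∧ Q j (ystar x) ≥ tI j}
          = {x : X | noisy x = i ∧ ystar x = j}) :=
  per_class_robustness_general noisy ystar phat Q e1 e2 hne he1 hdiff hrow tD tI htD htI
    hnocollision
end
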